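/- For every matrix A ∈ ℚ^{m×n} there exists a unique X ∈ ℚ^{n×m} satisfying the four Moore–Penrose equations: AXA = A, XAX = X, (AX)† = AX, and (XA)† = XA. (This matrix is called the Moore–Penrose inverse A⁺ of A.) -/
import Mathlib


open Quaternion Matrix Complex
open scoped ComplexOrder

noncomputable section

/-- The Hermitian conjugate a† of a complex quaternion. -/
def hconj (a : ℍ[ℂ]) : ℍ[ℂ] :=
  ⟨(starRingEnd ℂ) a.re, -((starRingEnd ℂ) a.imI),
   -((starRingEnd ℂ) a.imJ), -((starRingEnd ℂ) a.imK)⟩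

/-- The Hermitian conjugate A† of a complex quaternion matrix. -/
def mdagger {m n : ℕ} (A : Matrix (Fin m) (Fin n) ℍ[ℂ]) : Matrix (Fin n) (Fin m) ℍ[ℂ] :=
  Matrix.of fun t s => hconj (A s t)

/-! ### Existence of the Moore–Penrose inverse over `ℂ` -/

section ComplexMP

variable {m n : Type*} [Fintype m] [Fintype n] [DecidableEq n]

private lemma sandwich (U : Matrix n n ℂ) (huu : star U * U = 1) (v w : n → ℂ) :
    (U * diagonal v * star U) * (U * diagonal w * star U) =
      U * diagonal (v * w) * star U := by
  have h1 : star U * (U * (diagonal w * star U)) = diagonal w * star U := by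
    rw [← Matrix.mul_assoc (star U) U, huu, Matrix.one_mul]
  calc (U * diagonal v * star U) * (U * diagonal w * star U)
      = U * (diagonal v * (star U * (U * (diagonal w * star U)))) := by
        simp only [Matrix.mul_assoc]
    _ = U * (diagonal v * (diagonal w * star U)) := by rw [h1]
    _ = U * diagonal (v * w) * star U := by
        rw [← Matrix.mul_assoc (diagonal v), diagonal_mul_diagonal, Matrix.mul_assoc]
        rfl

private lemma sandwich_conjTranspose (U : Matrix n n ℂ) (v : n → ℂ) (hv : star v = v) :
    (U * diagonal v * star U)ᴴ = U * diagonal v * star U := by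
  rw [← Matrix.star_eq_conjTranspose]
  have hD : star (diagonal v) = diagonal v := by
    rw [Matrix.star_eq_conjTranspose, diagonal_conjTranspose, hv]
  rw [StarMul.star_mul, StarMul.star_mul, star_star, hD, Matrix.mul_assoc]

theorem complex_mp_exists (A : Matrix m n ℂ) :
    ∃ X : Matrix n m ℂ, A * X * A = A ∧ X * A * X = X ∧ (A * X)ᴴ = A * X ∧ (X * A)ᴴ = X * A := by
  have hH : (Aᴴ * A).IsHermitian := Matrix.isHermitian_conjTranspose_mul_self A
  set U : Matrix n n ℂ := (hH.eigenvectorUnitary : Matrix n n ℂ) with hU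
  have huu : star U * U = 1 := Matrix.mem_unitaryGroup_iff'.mp hH.eigenvectorUnitary.2
  set d : n → ℂ := RCLike.ofReal ∘ hH.eigenvalues with hd
  have hspec : Aᴴ * A = U * diagonal d * star U := hH.spectral_theorem
  have hdstar : star d = d := by
    funext i
    simp [hd, RCLike.star_def, RCLike.conj_ofReal]
  set g : n → ℂ := fun i => (d i)⁻¹ with hg
  have hgstar : star g = g := by
    funext i
    have : star (d i) = d i := congrFun hdstar i
    simp only [hg, Pi.star_apply, star_inv₀, this]
  set G : Matrix n m ℂ := U * diagonal g * star U * Aᴴ with hG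
  -- key pointwise identities
  have pid1 : d * (g * d) = d := by
    funext i
    simp only [Pi.mul_apply, hg]
    rcases eq_or_ne (d i) 0 with h | h
    · simp [h]
    · field_simp
  have pid2 : (g * d) * d = d := by
    funext i
    simp only [Pi.mul_apply, hg]
    rcases eq_or_ne (d i) 0 with h | h
    · simp [h]
    · field_simp
  have pid3 : (g * d) * g = g := by
    funext i
    simp only [Pi.mul_apply, hg]
    rcases eq_or_ne (d i) 0 with h | h
    · simp [h]
    · field_simp
  have pgdstar : star (g * d) = g * d := by
    funext i
    have hdi : star (d i) = d i := congrFun hdstar i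
    simp only [hg, Pi.star_apply, Pi.mul_apply, star_mul', star_inv₀, hdi]
  -- the projection P = (U g U†)(A†A)
  set P : Matrix n n ℂ := U * diagonal (g * d) * star U with hP
  have hGP : U * diagonal g * star U * (Aᴴ * A) = P := by
    rw [hspec, sandwich U huu]
  have hPconj : Pᴴ = P := sandwich_conjTranspose U _ pgdstar
  have hHP : (Aᴴ * A) * P = Aᴴ * A := by
    rw [hspec, hP, sandwich U huu, pid1]
  have hPH : P * (Aᴴ * A) = Aᴴ * A := by
    rw [hspec, hP, sandwich U huu, pid2]
  have hPgP : P * (U * diagonal g * star U) = U * diagonal g * star U := by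
    rw [hP, sandwich U huu, pid3]
  -- A * P = A
  have hAP : A * P = A := by
    have key : (A - A * P)ᴴ * (A - A * P) = 0 := by
      rw [conjTranspose_sub, conjTranspose_mul, hPconj, Matrix.sub_mul, Matrix.mul_sub,
        Matrix.mul_sub]
      have e1 : Aᴴ * (A * P) = Aᴴ * A := by rw [← Matrix.mul_assoc, hHP]
      have e2 : P * Aᴴ * A = Aᴴ * A := by rw [Matrix.mul_assoc, hPH]
      have e3 : P * Aᴴ * (A * P) = Aᴴ * A := by
        rw [Matrix.mul_assoc, ← Matrix.mul_assoc Aᴴ A P, hHP, hPH]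
      rw [e1, e2, e3]
      simp
    have := Matrix.conjTranspose_mul_self_eq_zero.mp key
    rw [sub_eq_zero] at this; exact this.symm
  refine ⟨G, ?_, ?_, ?_, ?_⟩
  · -- A * G * A = A
    calc A * G * A = A * (U * diagonal g * star U * (Aᴴ * A)) := by
          rw [hG]; simp only [Matrix.mul_assoc]
    _ = A * P := by rw [hGP]
    _ = A := hAP
  · -- G * A * G = G
    calc G * A * G = (U * diagonal g * star U * (Aᴴ * A)) * (U * diagonal g * star U) * Aᴴ := by
          rw [hG]; simp only [Matrix.mul_assoc]
    _ = P * (U * diagonal g * star U) * Aᴴ := by rw [hGP]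
    _ = U * diagonal g * star U * Aᴴ := by rw [hPgP]
    _ = G := hG.symm
  · -- (A * G)ᴴ = A * G
    have : A * G = A * (U * diagonal g * star U) * Aᴴ := by
      rw [hG]; simp only [Matrix.mul_assoc]
    rw [this, conjTranspose_mul, conjTranspose_mul, conjTranspose_conjTranspose,
      sandwich_conjTranspose U g hgstar]
    simp only [Matrix.mul_assoc]
  · -- (G * A)ᴴ = G * A
    have : G * A = P := by rw [hG, Matrix.mul_assoc (U * diagonal g * star U), hGP]
    rw [this, hPconj]


/-- Uniqueness of the Moore–Penrose inverse for complex matrices. -/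
theorem complex_mp_unique (A : Matrix m n ℂ) (X Y : Matrix n m ℂ)
    (hX : A * X * A = A ∧ X * A * X = X ∧ (A * X)ᴴ = A * X ∧ (X * A)ᴴ = X * A)
    (hY : A * Y * A = A ∧ Y * A * Y = Y ∧ (A * Y)ᴴ = A * Y ∧ (Y * A)ᴴ = Y * A) :
    X = Y := by
  obtain ⟨hX1, hX2, hX3, hX4⟩ := hX
  obtain ⟨hY1, hY2, hY3, hY4⟩ := hY
  have hAX : A * X = A * Y := by
    calc A * X = (A * X)ᴴ := hX3.symm
    _ = Xᴴ * Aᴴ := by rw [conjTranspose_mul]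
    _ = Xᴴ * (A * Y * A)ᴴ := by rw [hY1]
    _ = Xᴴ * (Aᴴ * (A * Y)ᴴ) := by rw [conjTranspose_mul]
    _ = (A * X)ᴴ * (A * Y) := by rw [hY3, conjTranspose_mul]; simp only [Matrix.mul_assoc]
    _ = A * X * (A * Y) := by rw [hX3]
    _ = A * (X * A * Y) := by simp only [Matrix.mul_assoc]
    _ = A * X * A * Y := by simp only [Matrix.mul_assoc]
    _ = A * Y := by rw [hX1]
  have hXA : X * A = Y * A := by
    calc X * A = (X * A)ᴴ := hX4.symm
    _ = Aᴴ * Xᴴ := by rw [conjTranspose_mul]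
    _ = (A * Y * A)ᴴ * Xᴴ := by rw [hY1]
    _ = (Y * A)ᴴ * (Aᴴ * Xᴴ) := by
        simp only [conjTranspose_mul, Matrix.mul_assoc]
    _ = Y * A * (X * A)ᴴ := by rw [hY4, conjTranspose_mul]
    _ = Y * (A * X * A) := by rw [hX4]; simp only [Matrix.mul_assoc]
    _ = Y * A := by rw [hX1]
  calc X = X * A * X := hX2.symm
  _ = Y * A * Y := by rw [hXA, Matrix.mul_assoc, hAX, ← Matrix.mul_assoc]
  _ = Y := hY2

end ComplexMP

/-! ### The embedding `ℍ[ℂ] → M₂(ℂ)` -/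

/-- The standard embedding of complex quaternions into 2×2 complex matrices. -/
def phi (a : ℍ[ℂ]) : Matrix (Fin 2) (Fin 2) ℂ :=
  !![a.re + a.imI * I, a.imJ + a.imK * I; -a.imJ + a.imK * I, a.re - a.imI * I]

/-- The inverse of `phi`. -/
def psi (M : Matrix (Fin 2) (Fin 2) ℂ) : ℍ[ℂ] :=
  ⟨(M 0 0 + M 1 1) / 2, (M 1 1 - M 0 0) * I / 2, (M 0 1 - M 1 0) / 2,
    -(M 0 1 + M 1 0) * I / 2⟩

lemma psi_phi (a : ℍ[ℂ]) : psi (phi a) = a := by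
  ext <;> simp [phi, psi] <;> ring_nf <;>
    simp [Complex.I_sq] <;> ring

lemma phi_psi (M : Matrix (Fin 2) (Fin 2) ℂ) : phi (psi M) = M := by
  ext i j
  fin_cases i <;> fin_cases j <;> simp [phi, psi] <;> ring_nf <;>
    simp [Complex.I_sq] <;> ring

lemma phi_add (a b : ℍ[ℂ]) : phi (a + b) = phi a + phi b := by
  ext i j; fin_cases i <;> fin_cases j <;> simp [phi] <;> ring

lemma phi_mul (a b : ℍ[ℂ]) : phi (a * b) = phi a * phi b := by
  ext i j
  fin_cases i <;> fin_cases j <;>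
    simp [phi, Matrix.mul_apply, Fin.sum_univ_two] <;> ring_nf <;>
      simp [Complex.I_sq] <;> ring

lemma phi_hconj (a : ℍ[ℂ]) : phi (hconj a) = (phi a)ᴴ := by
  ext i j
  fin_cases i <;> fin_cases j <;>
    simp [phi, hconj, conjTranspose_apply, map_add, map_sub, _root_.map_mul, Complex.conj_I] <;> ring

/-- `phi` as an additive monoid hom (for `map_sum`). -/
def phiAdd : ℍ[ℂ] →+ Matrix (Fin 2) (Fin 2) ℂ where
  toFun := phi
  map_zero' := by ext i j; fin_cases i <;> fin_cases j <;> simp [phi]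
  map_add' := phi_add

/-! ### The block embedding of quaternion matrices -/

/-- Block embedding of quaternion matrices into complex matrices. -/
def Phi {m n : ℕ} (A : Matrix (Fin m) (Fin n) ℍ[ℂ]) :
    Matrix (Fin m × Fin 2) (Fin n × Fin 2) ℂ :=
  Matrix.of fun p q => phi (A p.1 q.1) p.2 q.2

/-- Inverse of the block embedding. -/
def PhiInv {m n : ℕ} (Y : Matrix (Fin m × Fin 2) (Fin n × Fin 2) ℂ) :
    Matrix (Fin m) (Fin n) ℍ[ℂ] :=
  Matrix.of fun i j => psi (Matrix.of fun k l => Y (i, k) (j, l))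

lemma PhiInv_Phi {m n : ℕ} (A : Matrix (Fin m) (Fin n) ℍ[ℂ]) : PhiInv (Phi A) = A := by
  apply Matrix.ext
  intro i j
  exact psi_phi (A i j)

lemma Phi_PhiInv {m n : ℕ} (Y : Matrix (Fin m × Fin 2) (Fin n × Fin 2) ℂ) :
    Phi (PhiInv Y) = Y := by
  ext ⟨i, k⟩ ⟨j, l⟩
  show phi (psi (Matrix.of fun k l => Y (i, k) (j, l))) k l = Y (i, k) (j, l)
  rw [phi_psi]
  rfl

lemma Phi_inj {m n : ℕ} {A B : Matrix (Fin m) (Fin n) ℍ[ℂ]} (h : Phi A = Phi B) : A = B := by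
  rw [← PhiInv_Phi A, ← PhiInv_Phi B, h]

lemma Phi_mul {m n p : ℕ} (A : Matrix (Fin m) (Fin n) ℍ[ℂ]) (B : Matrix (Fin n) (Fin p) ℍ[ℂ]) :
    Phi (A * B) = Phi A * Phi B := by
  ext ⟨i, k⟩ ⟨j, l⟩
  show phi ((A * B) i j) k l = _
  rw [Matrix.mul_apply]
  have : phi (∑ x, A i x * B x j) = ∑ x, phi (A i x) * phi (B x j) := by
    rw [show phi (∑ x, A i x * B x j) = phiAdd (∑ x, A i x * B x j) from rfl, map_sum]
    exact Finset.sum_congr rfl fun x _ => phi_mul _ _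
  rw [this]
  rw [Matrix.mul_apply, Fintype.sum_prod_type]
  rw [Matrix.sum_apply]
  refine Finset.sum_congr rfl fun x _ => ?_
  rw [Matrix.mul_apply]
  rfl

lemma Phi_mdagger {m n : ℕ} (A : Matrix (Fin m) (Fin n) ℍ[ℂ]) :
    Phi (mdagger A) = (Phi A)ᴴ := by
  ext ⟨t, k⟩ ⟨s, l⟩
  show phi (hconj (A s t)) k l = star (phi (A s t) l k)
  rw [phi_hconj]
  rfl

/-! ### The main theorem -/

theorem stmt_14 (m n : ℕ) (A : Matrix (Fin m) (Fin n) ℍ[ℂ]) :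
    ∃! X : Matrix (Fin n) (Fin m) ℍ[ℂ],
      A * X * A = A ∧ X * A * X = X ∧ mdagger (A * X) = A * X ∧ mdagger (X * A) = X * A := by
  obtain ⟨Y, hY1, hY2, hY3, hY4⟩ := complex_mp_exists (Phi A)
  refine ⟨PhiInv Y, ⟨?_, ?_, ?_, ?_⟩, ?_⟩
  · apply Phi_inj
    rw [Phi_mul, Phi_mul, Phi_PhiInv, hY1]
  · apply Phi_inj
    rw [Phi_mul, Phi_mul, Phi_PhiInv, hY2]
  · apply Phi_inj
    rw [Phi_mdagger, Phi_mul, Phi_PhiInv, hY3]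
  · apply Phi_inj
    rw [Phi_mdagger, Phi_mul, Phi_PhiInv, hY4]
  · rintro X ⟨h1, h2, h3, h4⟩
    apply Phi_inj
    rw [Phi_PhiInv]
    refine complex_mp_unique (Phi A) (Phi X) Y ⟨?_, ?_, ?_, ?_⟩ ⟨hY1, hY2, hY3, hY4⟩
    · rw [← Phi_mul, ← Phi_mul, h1]
    · rw [← Phi_mul, ← Phi_mul, h2]
    · rw [← Phi_mul, ← Phi_mdagger, h3]
    · rw [← Phi_mul, ← Phi_mdagger, h4]

end
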